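/- arXiv:1803.01378 — 2 statements merged into one kernel-verified Lean document; each statement's English description precedes it below -/
import Mathlib

section
/- Strict positivity under ambiguous mappings (claim in the proof of Theorem 1, identity property): For M ≤ N, let q be a probability vector on Fin M and w a weight function on mappings σ : Fin N → Fin N with w σ ≥ 0 and ∑_σ w σ = 1. If there exist mappings σ₁ ≠ σ₂ with w σ₁ > 0 and w σ₂ > 0 such that σ₁_*(pad^{M,N} q) ≠ σ₂_*(pad^{M,N} q), then EEMD(p, q; w) > 0 for every probability vector p on Fin N. -/
open Finset

/-- A probability vector on `Fin n`. -/
def IsProbVec {n : ℕ} (p : Fin n → ℝ) : Prop :=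
  (∀ i, 0 ≤ p i) ∧ ∑ i, p i = 1

/-- A coupling between `p` and `q` on `Fin n`. -/
def IsCoupling {n : ℕ} (p q : Fin n → ℝ) (γ : Fin n → Fin n → ℝ) : Prop :=
  (∀ i j, 0 ≤ γ i j) ∧ (∀ i, ∑ j, γ i j = p i) ∧ (∀ j, ∑ i, γ i j = q j)

/-- Unit-cost Earth Mover's Distance: infimum of the off-diagonal mass over all couplings. -/
noncomputable def EMD {n : ℕ} (p q : Fin n → ℝ) : ℝ :=
  sInf { c : ℝ | ∃ γ : Fin n → Fin n → ℝ, IsCoupling p q γ ∧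
    c = ∑ i, ∑ j, if i ≠ j then γ i j else 0 }

/-- Zero-padding of a vector on `Fin M` into `Fin N`. -/
def pad (M N : ℕ) (q : Fin M → ℝ) : Fin N → ℝ :=
  fun i => if hi : (i : ℕ) < M then q ⟨i, hi⟩ else 0

/-- Pushforward of a vector `r` on `Fin n` along a mapping `σ : Fin n → Fin n`. -/
def pushforward {n : ℕ} (σ : Fin n → Fin n) (r : Fin n → ℝ) : Fin n → ℝ :=
  fun j => ∑ i ∈ Finset.univ.filter (fun i => σ i = j), r i

/-- Extended Earth Mover's Distance, with weight `w` over mappings `σ ` of the padded simplex. -/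
noncomputable def EEMD {M N : ℕ} (p : Fin N → ℝ) (q : Fin M → ℝ)
    (w : (Fin N → Fin N) → ℝ) : ℝ :=
  ∑ σ : Fin N → Fin N, w σ * EMD p (pushforward σ (pad M N q))

lemma pad_probVec {M N : ℕ} (hMN : M ≤ N) {q : Fin M → ℝ} (hq : IsProbVec q) :
    IsProbVec (pad M N q) := by
  refine ⟨fun i => ?_, ?_⟩
  · unfold pad
    split
    · exact hq.1 _
    · exact le_refl 0
  · have hg : ∀ i : Fin N, pad M N q i =
        (fun i : ℕ => if h : i < M then q ⟨i, h⟩ else 0) (i : ℕ) := fun i => rfl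
    calc ∑ i : Fin N, pad M N q i
        = ∑ i ∈ Finset.range N, (fun i : ℕ => if h : i < M then q ⟨i, h⟩ else 0) i := by
          simp_rw [hg]
          exact Fin.sum_univ_eq_sum_range (fun i : ℕ => if h : i < M then q ⟨i, h⟩ else 0) N
      _ = ∑ i ∈ Finset.range M, (fun i : ℕ => if h : i < M then q ⟨i, h⟩ else 0) i := by
          refine (Finset.sum_subset (Finset.range_subset_range.2 hMN) ?_).symm
          intro x _ hx
          simp only [Finset.mem_range, not_lt] at hx
          simp [Nat.not_lt.2 hx]
      _ = ∑ i : Fin M, q i := by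
          rw [← Fin.sum_univ_eq_sum_range]
          refine Finset.sum_congr rfl fun i _ => ?_
          simp [i.isLt]
      _ = 1 := hq.2

lemma pushforward_probVec {n : ℕ} (σ : Fin n → Fin n) {r : Fin n → ℝ}
    (hr : IsProbVec r) : IsProbVec (pushforward σ r) := by
  refine ⟨fun j => Finset.sum_nonneg fun i _ => hr.1 i, ?_⟩
  unfold pushforward
  rw [Finset.sum_fiberwise]
  exact hr.2

lemma emd_nonneg {n : ℕ} (p q : Fin n → ℝ) : 0 ≤ EMD p q := by
  apply Real.sInf_nonneg
  rintro c ⟨γ, hγ, rfl⟩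
  exact Finset.sum_nonneg fun i _ => Finset.sum_nonneg fun j _ => by
    split
    · exact hγ.1 i j
    · exact le_refl 0

lemma emd_ge {n : ℕ} {p r : Fin n → ℝ} (hp : IsProbVec p) (hr : IsProbVec r)
    (k : Fin n) : p k - r k ≤ EMD p r := by
  apply le_csInf
  · -- nonempty: product coupling
    refine ⟨_, ⟨fun i j => p i * r j, ⟨?_, ?_, ?_⟩, rfl⟩⟩
    · exact fun i j => mul_nonneg (hp.1 i) (hr.1 j)
    · intro i; rw [← Finset.mul_sum, hr.2, mul_one]
    · intro j; rw [← Finset.sum_mul, hp.2, one_mul]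
  · rintro c ⟨γ, ⟨hnn, hrow, hcol⟩, rfl⟩
    have hfk : ∑ j, (if k ≠ j then γ k j else 0) = p k - γ k k := by
      have : ∀ j, γ k j = (if k = j then γ k j else 0) + (if k ≠ j then γ k j else 0) := by
        intro j; by_cases h : k = j <;> simp [h]
      calc ∑ j, (if k ≠ j then γ k j else 0)
          = ∑ j, γ k j - ∑ j, (if k = j then γ k j else 0) := by
            rw [eq_sub_iff_add_eq, ← Finset.sum_add_distrib]
            exact Finset.sum_congr rfl fun j _ => by
              by_cases h : k = j <;> simp [h]
        _ = p k - γ k k := by rw [hrow k, Finset.sum_ite_eq]; simp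
    have h1 : p k - r k ≤ ∑ j, (if k ≠ j then γ k j else 0) := by
      rw [hfk]
      have : γ k k ≤ r k := by
        rw [← hcol k]
        exact Finset.single_le_sum (fun i _ => hnn i k) (Finset.mem_univ k)
      linarith
    refine h1.trans (Finset.single_le_sum (f := fun i => ∑ j, (if i ≠ j then γ i j else 0))
      (fun i _ => Finset.sum_nonneg fun j _ => ?_) (Finset.mem_univ k))
    split
    · exact hnn i j
    · exact le_refl 0

lemma emd_pos_of_ne {n : ℕ} {p r : Fin n → ℝ} (hp : IsProbVec p) (hr : IsProbVec r)
    (hne : p ≠ r) : 0 < EMD p r := by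
  have : ∃ k, r k < p k := by
    by_contra h
    push_neg at h
    apply hne
    funext i
    have := (Finset.sum_eq_sum_iff_of_le (fun i _ => h i)).1
      (by rw [hp.2, hr.2]) i (Finset.mem_univ i)
    linarith
  obtain ⟨k, hk⟩ := this
  have := emd_ge hp hr k
  linarith

/-- strict positivity of EEMD under ambiguous mappings. -/
theorem eemd_pos_of_ambiguous (M N : ℕ) (hMN : M ≤ N) (q : Fin M → ℝ)
    (hq : IsProbVec q)
    (w : (Fin N → Fin N) → ℝ) (hw : ∀ σ, 0 ≤ w σ) (hw1 : ∑ σ, w σ = 1)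
    (σ₁ σ₂ : Fin N → Fin N) (hne : σ₁ ≠ σ₂) (h1 : 0 < w σ₁) (h2 : 0 < w σ₂)
    (hpush : pushforward σ₁ (pad M N q) ≠ pushforward σ₂ (pad M N q)) :
    ∀ p : Fin N → ℝ, IsProbVec p → 0 < EEMD p q w := by
  intro p hp
  have hpadp := pad_probVec hMN hq
  obtain ⟨σ, hσw, hσne⟩ : ∃ σ, 0 < w σ ∧ p ≠ pushforward σ (pad M N q) := by
    by_cases hc : p = pushforward σ₁ (pad M N q)
    · exact ⟨σ₂, h2, fun h => hpush (hc.symm.trans h)⟩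
    · exact ⟨σ₁, h1, hc⟩
  have hpos : 0 < w σ * EMD p (pushforward σ (pad M N q)) :=
    mul_pos hσw (emd_pos_of_ne hp (pushforward_probVec σ hpadp) hσne)
  have hle : w σ * EMD p (pushforward σ (pad M N q)) ≤ EEMD p q w :=
    Finset.single_le_sum (f := fun τ => w τ * EMD p (pushforward τ (pad M N q)))
      (fun τ _ => mul_nonneg (hw τ) (emd_nonneg _ _)) (Finset.mem_univ σ)
  linarith
end

section
/- Lemma 1, core padding invariance: For N ≤ K and all probability vectors p and r on Fin N, the unit-cost Earth Mover's Distance is invariant under zero-padding: EMD_K(pad^{N,K} p, pad^{N,K} r) = EMD_N(p, r). -/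
open Finset

lemma sum_extend {N K : ℕ} (h : N ≤ K) (f : Fin K → ℝ)
    (hf : ∀ i : Fin K, N ≤ (i:ℕ) → f i = 0) :
    ∑ i, f i = ∑ i : Fin N, f (Fin.castLE h i) := by
  have h1 : ∑ i : Fin N, f (Fin.castLE h i)
      = ∑ i ∈ Finset.univ.map (Fin.castLEEmb h), f i := by
    rw [Finset.sum_map]; rfl
  rw [h1]
  symm
  apply Finset.sum_subset (Finset.subset_univ _)
  intro i _ hi
  apply hf
  by_contra hlt
  push_neg at hlt
  exact hi (Finset.mem_map.mpr ⟨⟨i, hlt⟩, Finset.mem_univ _, rfl⟩)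

/-- Lemma 1, core: EMD is invariant under zero-padding. -/
theorem emd_pad_invariant (N K : ℕ) (hNK : N ≤ K) (p r : Fin N → ℝ)
    (hp : IsProbVec p) (hr : IsProbVec r) :
    EMD (pad N K p) (pad N K r) = EMD p r := by
  unfold EMD
  congr 1
  ext c
  simp only [Set.mem_setOf_eq]
  constructor
  · rintro ⟨γ, ⟨hpos, hrow, hcol⟩, rfl⟩
    have hrow0 : ∀ i : Fin K, N ≤ (i:ℕ) → ∀ j, γ i j = 0 := by
      intro i hi j
      have h0 : ∑ j, γ i j = 0 := by
        rw [hrow i]; simp [pad, Nat.not_lt.mpr hi]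
      exact (Finset.sum_eq_zero_iff_of_nonneg (fun j _ => hpos i j)).mp h0 j (Finset.mem_univ _)
    have hcol0 : ∀ j : Fin K, N ≤ (j:ℕ) → ∀ i, γ i j = 0 := by
      intro j hj i
      have h0 : ∑ i, γ i j = 0 := by
        rw [hcol j]; simp [pad, Nat.not_lt.mpr hj]
      exact (Finset.sum_eq_zero_iff_of_nonneg (fun i _ => hpos i j)).mp h0 i (Finset.mem_univ _)
    refine ⟨fun i j => γ (Fin.castLE hNK i) (Fin.castLE hNK j),
      ⟨fun i j => hpos _ _, ?_, ?_⟩, ?_⟩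
    · intro i
      have := hrow (Fin.castLE hNK i)
      rw [sum_extend hNK _ (fun j hj => hcol0 j hj _)] at this
      rw [this]; simp [pad, Fin.castLE]
    · intro j
      have := hcol (Fin.castLE hNK j)
      rw [sum_extend hNK _ (fun i hi => hrow0 i hi _)] at this
      rw [this]; simp [pad, Fin.castLE]
    · rw [sum_extend hNK _ (fun i hi => ?_)]
      · apply Finset.sum_congr rfl
        intro i _
        rw [sum_extend hNK _ (fun j hj => ?_)]
        · apply Finset.sum_congr rfl
          intro j _
          congr 1
          simp [Fin.ext_iff]
        · simp [hcol0 j hj]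
      · simp [hrow0 i hi]
  · rintro ⟨δ, ⟨hpos, hrow, hcol⟩, rfl⟩
    set γ : Fin K → Fin K → ℝ := fun i j =>
      if hi : (i:ℕ) < N then if hj : (j:ℕ) < N then δ ⟨i, hi⟩ ⟨j, hj⟩ else 0 else 0 with hγ
    have hγ0r : ∀ i : Fin K, N ≤ (i:ℕ) → ∀ j, γ i j = 0 := by
      intro i hi j; simp [hγ, Nat.not_lt.mpr hi]
    have hγ0c : ∀ j : Fin K, N ≤ (j:ℕ) → ∀ i, γ i j = 0 := by
      intro j hj i; simp [hγ, Nat.not_lt.mpr hj]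
    have hγval : ∀ (i j : Fin N), γ (Fin.castLE hNK i) (Fin.castLE hNK j) = δ i j := by
      intro i j
      simp only [hγ]
      split_ifs with h1 h2
      · congr 1 <;> exact Fin.ext rfl
      · exact absurd j.isLt h2
      · exact absurd i.isLt h1
    refine ⟨γ, ⟨?_, ?_, ?_⟩, ?_⟩
    · intro i j
      simp only [hγ]
      split_ifs with h1 h2
      · exact hpos _ _
      · exact le_refl 0
      · exact le_refl 0
    · intro i
      by_cases hi : (i:ℕ) < N
      · have : ∑ j, γ (Fin.castLE hNK ⟨i, hi⟩) j = pad N K p (Fin.castLE hNK ⟨i, hi⟩) := by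
          rw [sum_extend hNK _ (fun j hj => hγ0c j hj _)]
          simp only [hγval]
          rw [hrow]
          simp [pad, Fin.castLE, hi]
        exact this
      · rw [Finset.sum_eq_zero (fun j _ => hγ0r i (Nat.not_lt.mp hi) j)]
        simp [pad, hi]
    · intro j
      by_cases hj : (j:ℕ) < N
      · have : ∑ i, γ i (Fin.castLE hNK ⟨j, hj⟩) = pad N K r (Fin.castLE hNK ⟨j, hj⟩) := by
          rw [sum_extend hNK _ (fun i hi => hγ0r i hi _)]
          simp only [hγval]
          rw [hcol]
          simp [pad, Fin.castLE, hj]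
        exact this
      · rw [Finset.sum_eq_zero (fun i _ => hγ0c j (Nat.not_lt.mp hj) i)]
        simp [pad, hj]
    · symm
      rw [sum_extend hNK _ (fun i hi => ?_)]
      · apply Finset.sum_congr rfl
        intro i _
        rw [sum_extend hNK _ (fun j hj => ?_)]
        · apply Finset.sum_congr rfl
          intro j _
          rw [hγval]
          congr 1
          simp [Fin.ext_iff]
        · simp [hγ0c j hj]
      · simp [hγ0r i hi]
end
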